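/- Let ⟨A, B, Q, q0, δ⟩ be a colorless deterministic concurrent arena and let q ∈ Q be a state that is strongly reachable from q0 and whose local interaction F_q = ⟨A, B, Q, δ(q,·,·)⟩ is not determined. Then there exist a non-empty set of colors K, a coloring function col : Q × Q → K, and an objective W ⊆ K^ω that is open (a union of cylinder sets), such that in the resulting deterministic concurrent game ⟨⟨A,B,Q,q0,δ,K,col⟩, W⟩ neither player has a winning color strategy. -/

import Mathlib

open MeasureTheory
open scoped Classical

universe u

/-- The cylinder set generated by a finite word. -/
def Cyl {K : Type u} (w : List K) : Set (ℕ → K) :=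
  {ρ | ∀ i : ℕ, ∀ h : i < w.length, ρ i = w.get ⟨i, h⟩}

/-- The σ-algebra on `ℕ → K` generated by cylinder sets. -/
def BorelSeq (K : Type u) : MeasurableSpace (ℕ → K) :=
  MeasurableSpace.generateFrom {s | ∃ w : List K, s = Cyl w}

/-- A game form (given by its outcome function `ρ : S_A → S_B → O`) is determined if
for every subset `V` of outcomes, either Player A can force the outcome into `V`,
or Player B can force it out of `V`. -/
def GFDetermined {SA SB O : Type u} (ρ : SA → SB → O) : Prop :=
  ∀ V : Set O, (∃ a, ∀ b, ρ a b ∈ V) ∨ (∃ b, ∀ a, ρ a b ∉ V)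

/-- The color history `col(π_0,π_1) ⋯ col(π_{n-1},π_n)` of a play prefix. -/
def colorHist {Q K : Type u} (col : Q → Q → K) (π : ℕ → Q) (n : ℕ) : List K :=
  List.ofFn (fun i : Fin n => col (π i) (π (i + 1)))

/-- The color sequence of an infinite play. -/
def colorSeq {Q K : Type u} (col : Q → Q → K) (π : ℕ → Q) : ℕ → K :=
  fun n => col (π n) (π (n + 1))

/-- `π` is a play consistent with Player A's color strategy `sA`. -/
def PlayA {A B Q K : Type u} (q0 : Q) (δ : Q → A → B → Q) (col : Q → Q → K)
    (sA : List K → Q → A) (π : ℕ → Q) : Prop :=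
  π 0 = q0 ∧ ∀ n, ∃ b, π (n + 1) = δ (π n) (sA (colorHist col π n) (π n)) b

/-- `π` is a play consistent with Player B's color strategy `sB`. -/
def PlayB {A B Q K : Type u} (q0 : Q) (δ : Q → A → B → Q) (col : Q → Q → K)
    (sB : List K → Q → B) (π : ℕ → Q) : Prop :=
  π 0 = q0 ∧ ∀ n, ∃ a, π (n + 1) = δ (π n) a (sB (colorHist col π n) (π n))

/-- Player A's color strategy `sA` is winning for objective `W`. -/
def WinA {A B Q K : Type u} (q0 : Q) (δ : Q → A → B → Q) (col : Q → Q → K)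
    (W : Set (ℕ → K)) (sA : List K → Q → A) : Prop :=
  ∀ π : ℕ → Q, PlayA q0 δ col sA π → colorSeq col π ∈ W

/-- Player B's color strategy `sB` is winning for the objective complementary to `W`. -/
def WinB {A B Q K : Type u} (q0 : Q) (δ : Q → A → B → Q) (col : Q → Q → K)
    (W : Set (ℕ → K)) (sB : List K → Q → B) : Prop :=
  ∀ π : ℕ → Q, PlayB q0 δ col sB π → colorSeq col π ∉ W

/-- The sets `R_i^q` used to define strong reachability: `R_0^q = {q}` and
`R_{i+1}^q` adds the states from which one of the players can force the next
state into `R_i^q`. -/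
def strongReach {A B Q : Type u} (δ : Q → A → B → Q) (q : Q) : ℕ → Set Q
  | 0 => {q}
  | i + 1 => strongReach δ q i ∪
      {q' | (∃ a, ∀ b, δ q' a b ∈ strongReach δ q i) ∨
            (∃ b, ∀ a, δ q' a b ∈ strongReach δ q i)}

/-!
Colour each move by the edge it takes, and call a move from `x` to `y` *closer* if `y` lies in
a layer `R_i^q` that does not contain `x`. Non-determinacy of `F_q` gives `V ⊆ Q` such that at
`q` Player A cannot force `V` and Player B cannot avoid it. The objective is: the play keeps
moving closer until it takes an escaping step, i.e. one from `q` into `V`, or one that is not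
closer although it starts at a state `x ≠ q` from which Player B could force a closer move.
This is an "until" condition, hence open. Player B refutes any strategy of A by avoiding `V` at
`q` and forcing closer moves where he can. Player A refutes any strategy of B by entering `V`
at `q`, escaping whenever B's move allows it, and otherwise forcing closer moves; every state
`x ≠ q` of `R^q` is forcing for one of the players, so the layers strictly decrease until A
escapes.
-/

open Set

namespace ConcurrentArena

variable {A B Q K : Type u}

theorem colorHist_succ (col : Q → Q → K) (π : ℕ → Q) (n : ℕ) :
    colorHist col π (n + 1) = colorHist col π n ++ [col (π n) (π (n + 1))] := by
  rw [colorHist, colorHist, List.ofFn_succ']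
  simp [List.concat_eq_append]

def histIter (q0 : Q) (col : Q → Q → K) (f : List K → Q → Q) : ℕ → List K × Q
  | 0 => ([], q0)
  | n + 1 =>
    let (h, x) := histIter q0 col f n
    (h ++ [col x (f h x)], f h x)

theorem exists_play (q0 : Q) (col : Q → Q → K) (f : List K → Q → Q) :
    ∃ π : ℕ → Q, π 0 = q0 ∧ ∀ n, π (n + 1) = f (colorHist col π n) (π n) := by
  let π n := (histIter q0 col f n).2
  have hist : ∀ n, (histIter q0 col f n).1 = colorHist col π n := by
    intro n
    induction n with
    | zero => simp [histIter, colorHist]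
    | succ n ih => rw [colorHist_succ, ← ih]; rfl
  exact ⟨π, rfl, fun n => by rw [← hist]; rfl⟩

theorem not_exists_winA_of_response {q0 : Q} {δ : Q → A → B → Q} {col : Q → Q → K}
    {W : Set (ℕ → K)} (β : Q → A → B)
    (hβ : ∀ π : ℕ → Q, π 0 = q0 → (∀ n, ∃ a, π (n + 1) = δ (π n) a (β (π n) a)) →
      colorSeq col π ∉ W) :
    ¬ ∃ sA, WinA q0 δ col W sA := by
  rintro ⟨sA, hsA⟩
  obtain ⟨π, h0, hstep⟩ := exists_play q0 col fun h x => δ x (sA h x) (β x (sA h x))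
  exact hβ π h0 (fun n => ⟨_, hstep n⟩) (hsA π ⟨h0, fun n => ⟨_, hstep n⟩⟩)

theorem not_exists_winB_of_response {q0 : Q} {δ : Q → A → B → Q} {col : Q → Q → K}
    {W : Set (ℕ → K)} (α : Q → B → A)
    (hα : ∀ π : ℕ → Q, π 0 = q0 → (∀ n, ∃ b, π (n + 1) = δ (π n) (α (π n) b) b) →
      colorSeq col π ∈ W) :
    ¬ ∃ sB, WinB q0 δ col W sB :=
  not_exists_winA_of_response (δ := fun x b a => δ x a b) (W := Wᶜ) α
    fun π h0 hπ => not_not_intro (hα π h0 hπ)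

def Until (P R : K → Prop) : Set (ℕ → K) :=
  {ρ | ∃ m, (∀ j < m, P (ρ j)) ∧ R (ρ m)}

theorem eq_biUnion_cyl_of_forall_prefix {W : Set (ℕ → K)}
    (hW : ∀ ρ ∈ W, ∃ N, ∀ ρ', (∀ i < N, ρ' i = ρ i) → ρ' ∈ W) :
    W = ⋃ w ∈ {w : List K | Cyl w ⊆ W}, Cyl w := by
  refine Subset.antisymm (fun ρ hρ => ?_) (iUnion₂_subset fun w hw => hw)
  obtain ⟨N, hN⟩ := hW ρ hρ
  refine mem_biUnion (x := List.ofFn fun i : Fin N => ρ i)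
    (fun ρ' hρ' => hN ρ' fun i hi => ?_) fun i hi => ?_
  · simpa using hρ' i (by simpa using hi)
  · simp

theorem until_eq_biUnion_cyl (P R : K → Prop) :
    Until P R = ⋃ w ∈ {w | Cyl w ⊆ Until P R}, Cyl w :=
  eq_biUnion_cyl_of_forall_prefix fun _ ⟨m, hP, hR⟩ =>
    ⟨m + 1, fun _ h => ⟨m, fun j hj => (h j (by omega)) ▸ hP j hj, (h m (by omega)) ▸ hR⟩⟩

section StrongReach

variable (δ : Q → A → B → Q) (q : Q)

theorem strongReach_mono : Monotone (strongReach δ q) :=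
  monotone_nat_of_le_succ fun _ => subset_union_left

def Closer (x y : Q) : Prop :=
  ∃ i, y ∈ strongReach δ q i ∧ x ∉ strongReach δ q i

variable {δ q}

theorem Closer.exists_lt_of_mem {x y : Q} {i : ℕ} (h : Closer δ q x y)
    (hx : x ∈ strongReach δ q i) : ∃ k < i, y ∈ strongReach δ q k := by
  obtain ⟨k, hy, hxk⟩ := h
  exact ⟨k, lt_of_not_ge fun hik => hxk (strongReach_mono δ q hik hx), hy⟩

theorem forces_closer_of_ne {x : Q} (hx : x ∈ ⋃ i, strongReach δ q i) (hne : x ≠ q) :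
    (∃ a, ∀ b, Closer δ q x (δ x a b)) ∨ ∃ b, ∀ a, Closer δ q x (δ x a b) := by
  obtain ⟨i, hi⟩ := mem_iUnion.mp hx
  induction i with
  | zero => exact absurd hi hne
  | succ k ih =>
    by_cases hk : x ∈ strongReach δ q k
    · exact ih hk
    · rcases hi with hi | ⟨a, ha⟩ | ⟨b, hb⟩
      · exact absurd hi hk
      · exact Or.inl ⟨a, fun b => ⟨k, ha b, hk⟩⟩
      · exact Or.inr ⟨b, fun a => ⟨k, hb a, hk⟩⟩

theorem mem_until_of_stop_or_closer {π : ℕ → Q} {Stop : Q → Q → Prop}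
    (h0 : π 0 ∈ ⋃ i, strongReach δ q i)
    (hstep : ∀ n, π n ∈ ⋃ i, strongReach δ q i →
      Stop (π n) (π (n + 1)) ∨ Closer δ q (π n) (π (n + 1))) :
    colorSeq Prod.mk π ∈ Until (Function.uncurry (Closer δ q)) (Function.uncurry Stop) := by
  suffices h : ∀ i j, π j ∈ strongReach δ q i → (∀ k < j, Closer δ q (π k) (π (k + 1))) →
      ∃ m, (∀ k < m, Closer δ q (π k) (π (k + 1))) ∧ Stop (π m) (π (m + 1)) by
    obtain ⟨i, hi⟩ := mem_iUnion.mp h0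
    exact h i 0 hi fun k hk => absurd hk (Nat.not_lt_zero k)
  intro i
  induction i using Nat.strong_induction_on with
  | _ i ih =>
    intro j hj hdesc
    rcases hstep j (mem_iUnion.mpr ⟨i, hj⟩) with hstop | hcl
    · exact ⟨j, hdesc, hstop⟩
    · obtain ⟨k, hki, hk⟩ := hcl.exists_lt_of_mem hj
      exact ih k hki (j + 1) hk fun l hl =>
        (Nat.lt_succ_iff_lt_or_eq.mp hl).elim (hdesc l) fun h => h ▸ hcl

variable (δ q)

def Escape (V : Set Q) (x y : Q) : Prop :=
  (x = q ∧ y ∈ V) ∨ (x ≠ q ∧ (∃ b, ∀ a, Closer δ q x (δ x a b)) ∧ ¬ Closer δ q x y)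

variable {δ q}

theorem exists_not_escape {V : Set Q} (hV : ∀ a, ∃ b, δ q a b ∉ V) (x : Q) (a : A) :
    ∃ b, ¬ Escape δ q V x (δ x a b) := by
  obtain ⟨b₀, hb₀⟩ := hV a
  by_cases hx : x = q
  · subst hx
    exact ⟨b₀, by simp [Escape, hb₀]⟩
  by_cases hB : ∃ b, ∀ a, Closer δ q x (δ x a b)
  · obtain ⟨b, hb⟩ := hB
    exact ⟨b, by simp [Escape, hx, hb a]⟩
  · exact ⟨b₀, by simp [Escape, hx, hB]⟩

theorem exists_escape_or_closer {V : Set Q} (hV : ∀ b, ∃ a, δ q a b ∈ V) (x : Q) (b : B) :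
    ∃ a, x ∈ ⋃ i, strongReach δ q i →
      Escape δ q V x (δ x a b) ∨ Closer δ q x (δ x a b) := by
  obtain ⟨a₀, ha₀⟩ := hV b
  by_cases hx : x = q
  · subst hx
    exact ⟨a₀, fun _ => Or.inl (Or.inl ⟨rfl, ha₀⟩)⟩
  by_cases hesc : ∃ a, Escape δ q V x (δ x a b)
  · obtain ⟨a, ha⟩ := hesc
    exact ⟨a, fun _ => Or.inl ha⟩
  by_cases hA : ∃ a, ∀ b, Closer δ q x (δ x a b)
  · obtain ⟨a, ha⟩ := hA
    exact ⟨a, fun _ => Or.inr (ha b)⟩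
  refine ⟨a₀, fun hreach => Or.inr ?_⟩
  -- `x` is forcing for Player B, and A cannot escape, so every move of A is closer
  have hB := (forces_closer_of_ne hreach hx).resolve_left hA
  by_contra hcl
  exact hesc ⟨a₀, Or.inr ⟨hx, hB, hcl⟩⟩

end StrongReach

end ConcurrentArena

open ConcurrentArena

theorem stmt4_general {A B Q : Type u}
    (q0 : Q) (δ : Q → A → B → Q) (q : Q)
    (hreach : q0 ∈ ⋃ i : ℕ, strongReach δ q i)
    (hnd : ¬ GFDetermined (δ q)) :
    ∃ (K : Type u) (_ : Nonempty K) (col : Q → Q → K) (W : Set (ℕ → K))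
      (S : Set (List K)),
      W = ⋃ w ∈ S, Cyl w ∧
      (¬ ∃ sA : List K → Q → A, WinA q0 δ col W sA) ∧
      (¬ ∃ sB : List K → Q → B, WinB q0 δ col W sB) := by
  obtain ⟨V, hVA, hVB⟩ : ∃ V : Set Q, (∀ a, ∃ b, δ q a b ∉ V) ∧ ∀ b, ∃ a, δ q a b ∈ V := by
    simpa [GFDetermined] using hnd
  choose β hβ using exists_not_escape hVA
  choose α hα using exists_escape_or_closer hVB
  refine ⟨Q × Q, ⟨(q, q)⟩, Prod.mk,
    Until (Function.uncurry (Closer δ q)) (Function.uncurry (Escape δ q V)), _,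
    until_eq_biUnion_cyl _ _, ?_, ?_⟩
  · refine not_exists_winA_of_response β fun π _ hπ ⟨m, _, hm⟩ => ?_
    obtain ⟨a, ha⟩ := hπ m
    exact hβ (π m) a (ha ▸ hm)
  · refine not_exists_winB_of_response α fun π h0 hπ =>
      mem_until_of_stop_or_closer (h0 ▸ hreach) fun n hn => ?_
    obtain ⟨b, hb⟩ := hπ n
    exact hb ▸ hα (π n) b hn

/-- If a state `q` with non-determined local interaction is strongly reachable from
the initial state of a colorless deterministic concurrent arena, then there are a
non-empty set of colors, a coloring function, and an open objective `W`
(a union of cylinder sets) such that neither player has a winning color strategy. -/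
theorem stmt4 {A B Q : Type u} [Nonempty A] [Nonempty B] [Nonempty Q]
    (q0 : Q) (δ : Q → A → B → Q) (q : Q)
    (hreach : q0 ∈ ⋃ i : ℕ, strongReach δ q i)
    (hnd : ¬ GFDetermined (δ q)) :
    ∃ (K : Type u) (_ : Nonempty K) (col : Q → Q → K) (W : Set (ℕ → K))
      (S : Set (List K)),
      W = ⋃ w ∈ S, Cyl w ∧
      (¬ ∃ sA : List K → Q → A, WinA q0 δ col W sA) ∧
      (¬ ∃ sB : List K → Q → B, WinB q0 δ col W sB) :=
  stmt4_general q0 δ q hreach hnd
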